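/- Main Poisson term: Let K be a number field of degree d, let t ≥ 1 and n ≥ 1, let B ⊆ K_ℝ^t be an origin-centered ball of volume V, and let g : K_ℝ^{t×n} → ℝ be g(x₁,…,x_n) = 1_B(x₁)⋯1_B(x_n). For 1 ≤ m ≤ n let A_m be the set of rank-m row-reduced echelon matrices D ∈ M_{m×n}(K) with entries in μ_K ∪ {0} and exactly one nonzero entry in each column. Then ∑_{m=1}^{n} ∑_{D ∈ A_m} 𝔇(D)^{−t} · ∫_{x ∈ K_ℝ^{t×m}} g(xD) dx = ω_K^n · e^{−V/ω_K} · ∑_{r=0}^{∞} (r^n/r!)·(V/ω_K)^r. -/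

import Mathlib

open scoped BigOperators ENNReal NNReal nonZeroDivisors
open MeasureTheory NumberField NumberField.InfinitePlace NumberField.mixedEmbedding

noncomputable section

namespace Paper

attribute [local instance] Classical.propDecidable

variable (K : Type*) [Field K] [NumberField K]

/-- The degree `d = [K:ℚ]`. -/
abbrev dK : ℕ := Module.finrank ℚ K

/-- The absolute value of the discriminant of `K`. -/
abbrev ΔK : ℕ := (NumberField.discr K).natAbs

/-- The trace quadratic form `Q(x) = Δ_K^{-2/d}·Tr(x·x̄)` on `K_ℝ ≅ ℝ^{r₁} × ℂ^{r₂}`. -/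
def qK (x : mixedSpace K) : ℝ :=
  ((ΔK K : ℝ) ^ (-(2 : ℝ) / (dK K : ℝ))) *
    ((∑ w, x.1 w ^ 2) + 2 * ∑ w, Complex.normSq (x.2 w))

/-- `V(N)`, the volume of the Euclidean unit ball in dimension `N`. -/
def vb (N : ℕ) : ℝ := Real.pi ^ ((N : ℝ) / 2) / Real.Gamma ((N : ℝ) / 2 + 1)

/-- The Lebesgue measure on `K_ℝ` associated with the quadratic form `qK`, i.e. the unique
Haar measure giving the unit ball of `qK` measure `V(d)`. -/
def μKR : Measure (mixedSpace K) :=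
  ((ENNReal.ofReal (vb (dK K)) / volume {x : mixedSpace K | qK K x ≤ 1}).toNNReal : ℝ≥0) •
    (volume : Measure (mixedSpace K))

/-- The Euclidean space `K_ℝ^t`. -/
abbrev EK (t : ℕ) := Fin t → mixedSpace K

/-- The quadratic form on `K_ℝ^t`, the orthogonal sum of `t` copies of `qK`. -/
def QE {t : ℕ} (x : EK K t) : ℝ := ∑ i, qK K (x i)

/-- The origin-centered ball of radius `R` in `K_ℝ^t`. -/
def ballK (t : ℕ) (R : ℝ) : Set (EK K t) := {x | QE K x ≤ R ^ 2}

/-- The Lebesgue measure on `K_ℝ^t`. -/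
def μEK (t : ℕ) : Measure (EK K t) := Measure.pi fun _ => μKR K

/-- Diagonal multiplication action of an element of `K` on `K_ℝ^t`. -/
def actK {t : ℕ} (α : K) (x : EK K t) : EK K t := fun a => mixedEmbedding K α * x a

/-- `α` is a root of unity, i.e. a member of `μ_K`. -/
def IsRootOfUnity (α : K) : Prop := ∃ n : ℕ, 0 < n ∧ α ^ n = 1

/-- `ω_K`, the number of roots of unity of `K`. -/
def ωK : ℕ := Nat.card {x : K // IsRootOfUnity K x}

/-- The Lebesgue measure on `K_ℝ^{t×m}`, viewed as `m` columns in `K_ℝ^t`. -/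
def μMK (t m : ℕ) : Measure (Fin m → EK K t) := Measure.pi fun _ => μEK K t

/-- A full-row-rank matrix in row-reduced echelon form: there are strictly increasing pivot
columns, the pivot entries are `1`, the entries to the left of a pivot vanish, and the other
entries of a pivot column vanish. -/
def IsRREF {m n : ℕ} (D : Matrix (Fin m) (Fin n) K) : Prop :=
  ∃ p : Fin m → Fin n, StrictMono p ∧
    (∀ i, D i (p i) = 1) ∧
    (∀ (i : Fin m) (j : Fin n), (j : ℕ) < (p i : ℕ) → D i j = 0) ∧
    (∀ i i', i' ≠ i → D i' (p i) = 0)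

/-- Multiplication of integral row vectors by the matrix `D`, as an additive map
`M_{1×m}(𝓞 K) → M_{1×n}(K)`. -/
def rowHom {m n : ℕ} (D : Matrix (Fin m) (Fin n) K) :
    (Fin m → 𝓞 K) →+ (Fin n → K) :=
  AddMonoidHom.mk' (fun C j => ∑ i, (algebraMap (𝓞 K) K (C i)) * D i j)
    (by
      intro C₁ C₂
      funext j
      simp [map_add, add_mul, Finset.sum_add_distrib])

/-- The sublattice `{C ∈ M_{1×m}(𝓞 K) | C·D ∈ M_{1×n}(𝓞 K)}` of `M_{1×m}(𝓞 K)`. -/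
def intLat {m n : ℕ} (D : Matrix (Fin m) (Fin n) K) : AddSubgroup (Fin m → 𝓞 K) :=
  AddSubgroup.comap (rowHom K D)
    (AddSubgroup.pi Set.univ fun _ => (algebraMap (𝓞 K) K).range.toAddSubgroup)

/-- `𝔇(D)`, the index of the sublattice `{C ∈ M_{1×m}(𝓞 K) | C·D ∈ M_{1×n}(𝓞 K)}`
in `M_{1×m}(𝓞 K)`. -/
def frakD {m n : ℕ} (D : Matrix (Fin m) (Fin n) K) : ℕ := (intLat K D).index




def IsCano {n m : ℕ} (φ : Fin n → Fin m) : Prop :=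
  ∃ p : Fin m → Fin n, StrictMono p ∧ (∀ i, φ (p i) = i) ∧ ∀ i j, φ j = i → p i ≤ j

variable {n m r : ℕ} {β : Type*}

/-- first-occurrence indices of `f`. -/
def Tset (f : Fin n → β) : Finset (Fin n) :=
  Finset.univ.filter (fun j => ∀ j', f j' = f j → j ≤ j')

lemma mem_Tset {f : Fin n → β} {j : Fin n} : j ∈ Tset f ↔ ∀ j', f j' = f j → j ≤ j' := by
  simp [Tset]

/-- first occurrence of the value `f j`. -/
def Fo (f : Fin n → β) (j : Fin n) : Fin n :=
  (Finset.univ.filter (fun j' => f j' = f j)).min'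
    ⟨j, Finset.mem_filter.mpr ⟨Finset.mem_univ _, rfl⟩⟩

lemma fo_apply (f : Fin n → β) (j : Fin n) : f (Fo f j) = f j := by
  have h : Fo f j ∈ Finset.univ.filter (fun j' => f j' = f j) := Finset.min'_mem _ _
  exact (Finset.mem_filter.mp h).2

lemma fo_min {f : Fin n → β} {j j' : Fin n} (h : f j' = f j) : Fo f j ≤ j' := by
  apply Finset.min'_le
  exact Finset.mem_filter.mpr ⟨Finset.mem_univ _, h⟩

lemma fo_le (f : Fin n → β) (j : Fin n) : Fo f j ≤ j := fo_min rfl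

lemma fo_mem_Tset (f : Fin n → β) (j : Fin n) : Fo f j ∈ Tset f := by
  rw [mem_Tset]
  intro j' h
  exact fo_min (h.trans (fo_apply f j))

lemma fo_eq_of_mem_Tset {f : Fin n → β} {j : Fin n} (h : j ∈ Tset f) : Fo f j = j :=
  le_antisymm (fo_le f j) ((mem_Tset.mp h) _ (fo_apply f j))

section key

variable {φ : Fin n → Fin m} {ι : Fin m → β} {p : Fin m → Fin n}

lemma fo_comp_eq_pivot (hι : Function.Injective ι) (hpl : ∀ i, φ (p i) = i)
    (hpm : ∀ i j, φ j = i → p i ≤ j) (j : Fin n) :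
    Fo (ι ∘ φ) j = p (φ j) := by
  refine le_antisymm (fo_min ?_) (hpm _ _ ?_)
  · simp [Function.comp, hpl]
  · exact hι (fo_apply (ι ∘ φ) j)

lemma Tset_comp_eq_image (hι : Function.Injective ι) (hmono : StrictMono p)
    (hpl : ∀ i, φ (p i) = i) (hpm : ∀ i j, φ j = i → p i ≤ j) :
    Tset (ι ∘ φ) = Finset.image p Finset.univ := by
  ext j
  constructor
  · intro hj
    have h2 := fo_eq_of_mem_Tset hj
    rw [fo_comp_eq_pivot hι hpl hpm] at h2
    exact Finset.mem_image.mpr ⟨φ j, Finset.mem_univ _, h2⟩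
  · intro hj
    obtain ⟨i, -, rfl⟩ := Finset.mem_image.mp hj
    rw [mem_Tset]
    intro j' h
    exact hpm i j' (by simpa [hpl] using hι h)

lemma Tset_comp_card (hι : Function.Injective ι) (hmono : StrictMono p)
    (hpl : ∀ i, φ (p i) = i) (hpm : ∀ i j, φ j = i → p i ≤ j) :
    (Tset (ι ∘ φ)).card = m := by
  rw [Tset_comp_eq_image hι hmono hpl hpm,
    Finset.card_image_of_injective _ hmono.injective, Finset.card_univ, Fintype.card_fin]

lemma Tset_cano_card (h : IsCano φ) : (Tset φ).card = m := by
  obtain ⟨p, hmono, hpl, hpm⟩ := h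
  have h2 := Tset_comp_card (φ := φ) (ι := id) (fun _ _ h => h) hmono hpl hpm
  simpa using h2

end key

def canoCard (n m : ℕ) : ℕ := Nat.card {φ : Fin n → Fin m // IsCano φ}

lemma canoCard_zero (hn : 1 ≤ n) : canoCard n 0 = 0 := by
  have : IsEmpty {φ : Fin n → Fin 0 // IsCano φ} := by
    refine ⟨fun ⟨φ, _⟩ => ?_⟩
    exact (φ ⟨0, hn⟩).elim0
  simp [canoCard, Nat.card_of_isEmpty]

theorem sum_canoCard (n r : ℕ) :
    r ^ n = ∑ m ∈ Finset.range (n + 1), canoCard n m * r.descFactorial m := by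
  classical
  set S := Σ m : Fin (n + 1), {φ : Fin n → Fin (m : ℕ) // IsCano φ} × (Fin (m : ℕ) ↪ Fin r) with hS
  set F : S → (Fin n → Fin r) := fun σ j => σ.2.2 (σ.2.1.1 j) with hF
  have hinj : Function.Injective F := by
    rintro ⟨m₁, ⟨φ₁, hφ₁⟩, ι₁⟩ ⟨m₂, ⟨φ₂, hφ₂⟩, ι₂⟩ hEq
    obtain ⟨p₁, hmono₁, hpl₁, hpm₁⟩ := hφ₁
    obtain ⟨p₂, hmono₂, hpl₂, hpm₂⟩ := hφ₂
    set f : Fin n → Fin r := fun j => ι₁ (φ₁ j) with hf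
    have hf₂ : f = fun j => ι₂ (φ₂ j) := hEq
    have hcard₁ : (Tset f).card = (m₁ : ℕ) :=
      Tset_comp_card ι₁.injective hmono₁ hpl₁ hpm₁
    have hfc₁ : f = ⇑ι₁ ∘ φ₁ := rfl
    have hfc₂ : f = ⇑ι₂ ∘ φ₂ := hf₂
    have hcard₂ : (Tset f).card = (m₂ : ℕ) := by
      rw [hfc₂]; exact Tset_comp_card ι₂.injective hmono₂ hpl₂ hpm₂
    have hmm : m₁ = m₂ := Fin.ext (hcard₁.symm.trans hcard₂)
    subst hmm
    have hTmem₁ : ∀ i, p₁ i ∈ Tset f := by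
      intro i
      rw [hfc₁, Tset_comp_eq_image ι₁.injective hmono₁ hpl₁ hpm₁]
      exact Finset.mem_image.mpr ⟨i, Finset.mem_univ _, rfl⟩
    have hTmem₂ : ∀ i, p₂ i ∈ Tset f := by
      intro i
      rw [hfc₂, Tset_comp_eq_image ι₂.injective hmono₂ hpl₂ hpm₂]
      exact Finset.mem_image.mpr ⟨i, Finset.mem_univ _, rfl⟩
    have hp : p₁ = p₂ := by
      rw [Finset.orderEmbOfFin_unique hcard₁ hTmem₁ hmono₁,
        Finset.orderEmbOfFin_unique hcard₁ hTmem₂ hmono₂]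
    have hφ : φ₁ = φ₂ := by
      funext j
      apply hmono₁.injective
      have e₁ := fo_comp_eq_pivot ι₁.injective hpl₁ hpm₁ j
      have e₂ := fo_comp_eq_pivot ι₂.injective hpl₂ hpm₂ j
      rw [← hfc₁] at e₁
      rw [← hfc₂] at e₂
      rw [← e₁, e₂, hp]
    have hι : ι₁ = ι₂ := by
      ext i
      have t₁ : ι₁ i = f (p₁ i) := by rw [hf]; simp [hpl₁]
      have t₂ : ι₂ i = f (p₂ i) := by rw [hf₂]; simp [hpl₂]
      rw [t₁, t₂, hp]
    apply congrArg (Sigma.mk m₁)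
    exact Prod.ext (Subtype.ext hφ) hι
  have hsurj : Function.Surjective F := by
    intro f
    set T := Tset f with hT
    have hlt : T.card < n + 1 := by
      have := Finset.card_le_univ T
      simpa using Nat.lt_succ_of_le (by simpa using this)
    set e := T.orderEmbOfFin (rfl : T.card = T.card) with he
    have hrange : ∀ j, ∃ i, e i = Fo f j := by
      intro j
      have h3 : Fo f j ∈ Set.range e := by
        rw [he, Finset.range_orderEmbOfFin]
        exact Finset.mem_coe.mpr (fo_mem_Tset f j)
      exact h3
    set φ : Fin n → Fin T.card := fun j => (hrange j).choose with hφ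
    have hφe : ∀ j, e (φ j) = Fo f j := fun j => (hrange j).choose_spec
    have hmem : ∀ i, (e i : Fin n) ∈ T := fun i => Finset.orderEmbOfFin_mem T _ i
    have hecano : ∀ i, φ (e i) = i := by
      intro i
      apply e.injective
      rw [hφe, fo_eq_of_mem_Tset (hmem i)]
    have hinj' : Function.Injective (fun i => f (e i)) := by
      intro i i' hii
      apply e.injective
      have h1 := (mem_Tset.mp (hmem i)) (e i') hii.symm
      have h2 := (mem_Tset.mp (hmem i')) (e i) hii
      exact le_antisymm h1 h2
    refine ⟨⟨⟨T.card, hlt⟩, ⟨⟨φ, ⟨⇑e, e.strictMono, hecano, ?_⟩⟩, ⟨fun i => f (e i), hinj'⟩⟩⟩, ?_⟩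
    · intro i j hj
      have : e i = Fo f j := by rw [← hj, hφe]
      rw [this]; exact fo_le f j
    · funext j
      show f (e (φ j)) = f j
      rw [hφe]; exact fo_apply f j
  have hbij : Function.Bijective F := ⟨hinj, hsurj⟩
  have hcardeq : Nat.card S = Nat.card (Fin n → Fin r) := Nat.card_eq_of_bijective F hbij
  have h1 : Nat.card (Fin n → Fin r) = r ^ n := by
    rw [Nat.card_fun]; simp
  have h2 : Nat.card S = ∑ m ∈ Finset.range (n + 1), canoCard n m * r.descFactorial m := by
    rw [Nat.card_eq_fintype_card, Fintype.card_sigma]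
    rw [← Fin.sum_univ_eq_sum_range (fun m => canoCard n m * r.descFactorial m)]
    congr 1
    funext m
    rw [Fintype.card_prod, Fintype.card_embedding_eq]
    simp [canoCard, Nat.card_eq_fintype_card]
  rw [← h1, ← hcardeq, h2]




lemma myHasSumExp (x : ℝ) : HasSum (fun n : ℕ => x ^ n / (Nat.factorial n)) (Real.exp x) := by
  rw [Real.exp_eq_exp_ℝ]; exact NormedSpace.expSeries_div_hasSum_exp x

lemma hasSum_descFactorial (x : ℝ) (m : ℕ) :
    HasSum (fun r : ℕ => (r.descFactorial m : ℝ) * x ^ r / (Nat.factorial r)) (x ^ m * Real.exp x) := by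
  have hshift : (fun k : ℕ => ((k + m).descFactorial m : ℝ) * x ^ (k + m) / (Nat.factorial (k + m)))
      = fun k : ℕ => x ^ (k + m) / (Nat.factorial k) := by
    funext k
    have hd : ((Nat.factorial k) : ℝ) * ((k + m).descFactorial m : ℝ) = ((Nat.factorial (k + m)) : ℝ) := by
      rw [← Nat.cast_mul, ← Nat.factorial_mul_descFactorial (Nat.le_add_left m k)]
      simp
    have hk : ((Nat.factorial k) : ℝ) ≠ 0 := Nat.cast_ne_zero.mpr (Nat.factorial_ne_zero k)
    have hkm : ((Nat.factorial (k + m)) : ℝ) ≠ 0 := Nat.cast_ne_zero.mpr (Nat.factorial_ne_zero _)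
    rw [div_eq_div_iff hkm hk]
    linear_combination x ^ (k + m) * hd
  have h2 : HasSum (fun k : ℕ => x ^ (k + m) / (Nat.factorial k)) (x ^ m * Real.exp x) := by
    simpa [pow_add, mul_comm, mul_div_assoc] using (myHasSumExp x).mul_left (x ^ m)
  have h3 : HasSum (fun k : ℕ =>
      ((k + m).descFactorial m : ℝ) * x ^ (k + m) / (Nat.factorial (k + m))) (x ^ m * Real.exp x) := by
    rwa [hshift]
  have h4 := (hasSum_nat_add_iff (f := fun r : ℕ => (r.descFactorial m : ℝ) * x ^ r / (Nat.factorial r)) m).mp h3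
  have h5 : ∑ i ∈ Finset.range m, ((i.descFactorial m : ℝ) * x ^ i / (Nat.factorial i)) = 0 := by
    apply Finset.sum_eq_zero
    intro i hi
    rw [Nat.descFactorial_eq_zero_iff_lt.mpr (Finset.mem_range.mp hi)]
    simp
  rwa [h5, add_zero] at h4

lemma rhs_eval (cc : ℕ → ℕ) (n : ℕ) (hn : 1 ≤ n) (x : ℝ)
    (hcano : ∀ r : ℕ, (r : ℝ) ^ n
      = ∑ m ∈ Finset.range (n + 1), (cc m : ℝ) * (r.descFactorial m : ℝ))
    (hzero : cc 0 = 0) :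
    Real.exp (-x) * ∑' r : ℕ, ((r : ℝ) ^ n / (Nat.factorial r)) * x ^ r
      = ∑ m ∈ Finset.Icc 1 n, (cc m : ℝ) * x ^ m := by
  have hterm : ∀ r : ℕ, ((r : ℝ) ^ n / (Nat.factorial r)) * x ^ r
      = ∑ m ∈ Finset.range (n + 1),
          (cc m : ℝ) * ((r.descFactorial m : ℝ) * x ^ r / (Nat.factorial r)) := by
    intro r
    rw [hcano r, Finset.sum_div, Finset.sum_mul]
    congr 1
    funext m
    ring
  have hsum : ∑' r : ℕ, ((r : ℝ) ^ n / (Nat.factorial r)) * x ^ r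
      = ∑ m ∈ Finset.range (n + 1), (cc m : ℝ) * (x ^ m * Real.exp x) := by
    rw [tsum_congr hterm]
    rw [Summable.tsum_finsetSum (fun m _ => ((hasSum_descFactorial x m).mul_left _).summable)]
    congr 1
    funext m
    rw [((hasSum_descFactorial x m).mul_left _).tsum_eq]
  rw [hsum, Finset.mul_sum]
  have hIcc : Finset.range (n + 1) = insert 0 (Finset.Icc 1 n) := by
    ext j; simp [Finset.mem_range, Finset.mem_Icc]; omega
  rw [hIcc, Finset.sum_insert (by simp)]
  rw [hzero]
  simp only [Nat.cast_zero, zero_mul, add_zero, mul_zero, zero_add]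
  apply Finset.sum_congr rfl
  intro m _
  have hexp : Real.exp (-x) * Real.exp x = 1 := by rw [← Real.exp_add]; simp
  linear_combination ((cc m : ℝ) * x ^ m) * hexp


section RootsOfUnity
variable {K}

lemma isRootOfUnity_one : IsRootOfUnity K 1 := ⟨1, one_pos, one_pow 1⟩

lemma IsRootOfUnity.ne_zero {x : K} (h : IsRootOfUnity K x) : x ≠ 0 := by
  obtain ⟨k, hk, hxk⟩ := h
  intro h0
  rw [h0, zero_pow (Nat.pos_iff_ne_zero.mp hk)] at hxk
  exact zero_ne_one hxk

lemma IsRootOfUnity.isIntegral {x : K} (h : IsRootOfUnity K x) : IsIntegral ℤ x := by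
  obtain ⟨k, hk, hxk⟩ := h
  refine ⟨Polynomial.X ^ k - Polynomial.C 1, Polynomial.monic_X_pow_sub_C 1 (Nat.pos_iff_ne_zero.mp hk), ?_⟩
  simp [hxk]

lemma IsRootOfUnity.mem_range {x : K} (h : IsRootOfUnity K x) :
    x ∈ Set.range (algebraMap (𝓞 K) K) := ⟨⟨x, h.isIntegral⟩, rfl⟩

instance : Finite {x : K // IsRootOfUnity K x} := by
  have hmap : ∀ x : {x : K // IsRootOfUnity K x}, ∃ u : NumberField.Units.torsion K,
      (((u : (𝓞 K)ˣ) : 𝓞 K) : K) = (x : K) := by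
    rintro ⟨x, hx⟩
    obtain ⟨k, hk0, hxk⟩ := hx
    have hxint : IsIntegral ℤ x := IsRootOfUnity.isIntegral ⟨k, hk0, hxk⟩
    set y : 𝓞 K := ⟨x, hxint⟩ with hy
    have hyk : y ^ k = 1 := by
      ext
      push_cast
      exact hxk
    have hmul : y * y ^ (k - 1) = 1 := by
      rw [← pow_succ', show k - 1 + 1 = k from by omega]
      exact hyk
    set u : (𝓞 K)ˣ := Units.mkOfMulEqOne y (y ^ (k - 1)) hmul with hu
    have hut : u ∈ NumberField.Units.torsion K := by
      rw [NumberField.Units.torsion, CommGroup.mem_torsion, isOfFinOrder_iff_pow_eq_one]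
      exact ⟨k, hk0, Units.ext (by rw [Units.val_pow_eq_pow_val]; exact hyk)⟩
    exact ⟨⟨u, hut⟩, rfl⟩
  set F : {x : K // IsRootOfUnity K x} → NumberField.Units.torsion K :=
    fun x => (hmap x).choose with hF
  have hFinj : Function.Injective F := by
    intro a b hab
    have ha : ((((F a : NumberField.Units.torsion K) : (𝓞 K)ˣ) : 𝓞 K) : K) = (a : K) :=
      (hmap a).choose_spec
    have hb : ((((F b : NumberField.Units.torsion K) : (𝓞 K)ˣ) : 𝓞 K) : K) = (b : K) :=
      (hmap b).choose_spec
    apply Subtype.ext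
    rw [← ha, ← hb, hab]
  exact Finite.of_injective F hFinj

lemma ωK_pos : 0 < ωK K := by
  have : Nonempty {x : K // IsRootOfUnity K x} := ⟨⟨1, isRootOfUnity_one⟩⟩
  exact Nat.card_pos

end RootsOfUnity

section Analysis
variable {K}

lemma pow_abs_eq_one {a : ℝ} {k : ℕ} (hk : 0 < k) (h : a ^ k = 1) : a ^ 2 = 1 := by
  have h1 : |a| ^ k = 1 := by rw [← abs_pow, h, abs_one]
  have h2 : |a| = 1 := by
    rcases lt_trichotomy (|a|) 1 with hlt | heq | hgt
    · have := pow_lt_one₀ (abs_nonneg a) hlt (Nat.pos_iff_ne_zero.mp hk)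
      linarith
    · exact heq
    · have := one_lt_pow₀ hgt (Nat.pos_iff_ne_zero.mp hk)
      linarith
  calc a ^ 2 = |a| ^ 2 := (sq_abs a).symm
  _ = 1 := by rw [h2]; norm_num

lemma nonneg_pow_eq_one {a : ℝ} {k : ℕ} (ha : 0 ≤ a) (hk : 0 < k) (h : a ^ k = 1) : a = 1 := by
  have h2 := pow_abs_eq_one hk h
  nlinarith

lemma qK_rou_mul {ζ : K} (h : IsRootOfUnity K ζ) (z : mixedSpace K) :
    qK K (mixedEmbedding K ζ * z) = qK K z := by
  obtain ⟨k, hk, hζk⟩ := h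
  unfold qK
  congr 1
  have h1 : ∀ w : {w : InfinitePlace K // IsReal w},
      ((mixedEmbedding K ζ * z).1 w) ^ 2 = (z.1 w) ^ 2 := by
    intro w
    have : (mixedEmbedding K ζ * z).1 w = (mixedEmbedding K ζ).1 w * z.1 w := rfl
    rw [this, mixedEmbedding_apply_isReal]
    set c := embedding_of_isReal w.prop ζ with hc
    have hck : c ^ k = 1 := by rw [hc, ← map_pow, hζk, map_one]
    rw [mul_pow, pow_abs_eq_one hk hck, one_mul]
  have h2 : ∀ w : {w : InfinitePlace K // IsComplex w},
      Complex.normSq ((mixedEmbedding K ζ * z).2 w) = Complex.normSq (z.2 w) := by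
    intro w
    have : (mixedEmbedding K ζ * z).2 w = (mixedEmbedding K ζ).2 w * z.2 w := rfl
    rw [this, mixedEmbedding_apply_isComplex]
    set c := NumberField.InfinitePlace.embedding w.val ζ with hc
    have hck : c ^ k = 1 := by rw [hc, ← map_pow, hζk, map_one]
    have hn : Complex.normSq c = 1 := by
      apply nonneg_pow_eq_one (Complex.normSq_nonneg c) hk
      rw [← map_pow, hck, map_one]
    rw [map_mul, hn, one_mul]
  rw [Finset.sum_congr rfl (fun w _ => h1 w), Finset.sum_congr rfl (fun w _ => h2 w)]

lemma QE_act {t : ℕ} {ζ : K} (h : IsRootOfUnity K ζ) (y : EK K t) :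
    QE K (actK K ζ y) = QE K y := by
  unfold QE actK
  exact Finset.sum_congr rfl (fun a _ => qK_rou_mul h (y a))

lemma indicator_act {t : ℕ} {R : ℝ} {ζ : K} (h : IsRootOfUnity K ζ) (y : EK K t) :
    (ballK K t R).indicator (fun _ => (1 : ℝ)) (actK K ζ y)
      = (ballK K t R).indicator (fun _ => (1 : ℝ)) y := by
  have hmem : actK K ζ y ∈ ballK K t R ↔ y ∈ ballK K t R := by
    unfold ballK
    simp only [Set.mem_setOf_eq, QE_act h]
  by_cases hy : y ∈ ballK K t R
  · rw [Set.indicator_of_mem (hmem.mpr hy), Set.indicator_of_mem hy]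
  · rw [Set.indicator_of_notMem (fun hc => hy (hmem.mp hc)), Set.indicator_of_notMem hy]

lemma continuous_qK : Continuous (qK K) := by
  unfold qK
  apply Continuous.mul continuous_const
  apply Continuous.add
  · apply continuous_finset_sum
    intro w _
    exact ((continuous_apply w).comp continuous_fst).pow 2
  · apply Continuous.mul continuous_const
    apply continuous_finset_sum
    intro w _
    exact Complex.continuous_normSq.comp ((continuous_apply w).comp continuous_snd)

lemma measurableSet_ballK {t : ℕ} {R : ℝ} : MeasurableSet (ballK K t R) := by
  have hQE : Continuous (QE K (t := t)) := by
    unfold QE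
    apply continuous_finset_sum
    intro i _
    exact continuous_qK.comp (continuous_apply i)
  exact (isClosed_le hQE continuous_const).measurableSet

instance : SigmaFinite (μKR K) := by
  unfold μKR
  infer_instance

instance {t : ℕ} : SigmaFinite (μEK K t) := by
  unfold μEK
  infer_instance

lemma prod_indicator_surj {t m n : ℕ} {R : ℝ} (φ : Fin n → Fin m)
    (hsurj : Function.Surjective φ) (x : Fin m → EK K t) :
    (∏ j, (ballK K t R).indicator (fun _ => (1 : ℝ)) (x (φ j)))
      = ∏ i, (ballK K t R).indicator (fun _ => (1 : ℝ)) (x i) := by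
  classical
  set u : Fin m → ℝ := fun i => (ballK K t R).indicator (fun _ => (1 : ℝ)) (x i) with hu
  have hval : ∀ i, u i = 0 ∨ u i = 1 := by
    intro i
    by_cases h : x i ∈ ballK K t R
    · right; simp [hu, Set.indicator_of_mem h]
    · left; simp [hu, Set.indicator_of_notMem h]
  rw [show (∏ j, (ballK K t R).indicator (fun _ => (1 : ℝ)) (x (φ j))) = ∏ j, u (φ j) from rfl,
    Finset.prod_comp u φ, Finset.image_univ_of_surjective hsurj]
  apply Finset.prod_congr rfl
  intro i _
  have hcard : 0 < (Finset.univ.filter (fun j => φ j = i)).card := by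
    obtain ⟨j, hj⟩ := hsurj i
    exact Finset.card_pos.mpr ⟨j, Finset.mem_filter.mpr ⟨Finset.mem_univ _, hj⟩⟩
  rcases hval i with h0 | h1
  · rw [h0, zero_pow (Nat.pos_iff_ne_zero.mp hcard)]
  · rw [h1, one_pow]

lemma integral_eval {t m n : ℕ} {R V : ℝ} (hV : 0 ≤ V)
    (hvol : μEK K t (ballK K t R) = ENNReal.ofReal V)
    (D : Matrix (Fin m) (Fin n) K) (φ : Fin n → Fin m) (hsurj : Function.Surjective φ)
    (hnz : ∀ j, IsRootOfUnity K (D (φ j) j)) (hz : ∀ i j, i ≠ φ j → D i j = 0) :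
    ∫ x : Fin m → EK K t,
        (∏ j, (ballK K t R).indicator (fun _ => (1 : ℝ)) (∑ i, actK K (D i j) (x i)))
        ∂(μMK K t m) = V ^ m := by
  have hcollapse : ∀ (x : Fin m → EK K t) (j : Fin n),
      (∑ i, actK K (D i j) (x i)) = actK K (D (φ j) j) (x (φ j)) := by
    intro x j
    apply Finset.sum_eq_single (φ j)
    · intro i _ hi
      rw [hz i j hi]
      funext a
      show mixedEmbedding K 0 * x i a = 0
      rw [map_zero, zero_mul]
    · intro h; exact absurd (Finset.mem_univ _) h
  have hrw : ∀ x : Fin m → EK K t,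
      (∏ j, (ballK K t R).indicator (fun _ => (1 : ℝ)) (∑ i, actK K (D i j) (x i)))
        = (Set.pi Set.univ (fun _ : Fin m => ballK K t R)).indicator
            (fun _ => (1 : ℝ)) x := by
    intro x
    have h1 : ∀ j, (ballK K t R).indicator (fun _ => (1 : ℝ)) (∑ i, actK K (D i j) (x i))
        = (ballK K t R).indicator (fun _ => (1 : ℝ)) (x (φ j)) := by
      intro j
      rw [hcollapse x j]
      exact indicator_act (hnz j) _
    rw [Finset.prod_congr rfl (fun j _ => h1 j), prod_indicator_surj φ hsurj]
    by_cases hx : x ∈ Set.pi Set.univ (fun _ : Fin m => ballK K t R)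
    · rw [Set.indicator_of_mem hx]
      have hx' := Set.mem_univ_pi.mp hx
      exact Finset.prod_eq_one (fun i _ => Set.indicator_of_mem (hx' i) _)
    · rw [Set.indicator_of_notMem hx]
      have hx' := hx
      rw [Set.mem_univ_pi] at hx'
      push_neg at hx'
      obtain ⟨i, hi⟩ := hx'
      exact Finset.prod_eq_zero (Finset.mem_univ i) (Set.indicator_of_notMem hi _)
  rw [MeasureTheory.integral_congr_ae (Filter.Eventually.of_forall hrw)]
  rw [MeasureTheory.integral_indicator_const (1 : ℝ)
    (MeasurableSet.univ_pi (fun _ => measurableSet_ballK))]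
  rw [smul_eq_mul, mul_one]
  unfold μMK
  rw [measureReal_def, MeasureTheory.Measure.pi_pi]
  simp only [hvol, Finset.prod_const, Finset.card_univ, Fintype.card_fin]
  rw [← ENNReal.ofReal_pow hV, ENNReal.toReal_ofReal (pow_nonneg hV m)]

lemma frakD_eq_one {m n : ℕ} (D : Matrix (Fin m) (Fin n) K)
    (hD : ∀ i j, D i j = 0 ∨ IsRootOfUnity K (D i j)) : frakD K D = 1 := by
  have htop : intLat K D = ⊤ := by
    rw [AddSubgroup.eq_top_iff']
    intro C
    rw [intLat, AddSubgroup.mem_comap, AddSubgroup.mem_pi]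
    intro j _
    have hrange : ∀ i, ∃ e : 𝓞 K, algebraMap (𝓞 K) K e = D i j := by
      intro i
      rcases hD i j with h0 | hrou
      · exact ⟨0, by rw [map_zero, h0]⟩
      · obtain ⟨e, he⟩ := hrou.mem_range
        exact ⟨e, he⟩
    choose e he using hrange
    rw [Subring.mem_toAddSubgroup, RingHom.mem_range]
    refine ⟨∑ i, C i * e i, ?_⟩
    show algebraMap (𝓞 K) K (∑ i, C i * e i) = ∑ i, algebraMap (𝓞 K) K (C i) * D i j
    rw [map_sum]
    exact Finset.sum_congr rfl (fun i _ => by rw [map_mul, he i])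
  rw [frakD, htop, AddSubgroup.index_top]

end Analysis

section ATsec

variable {K}

instance fintypeRou : Fintype {x : K // IsRootOfUnity K x} := Fintype.ofFinite _

variable {n m : ℕ}

/-- The matrix associated with a canonical surjection and root-of-unity data. -/
def Gmat (φ : Fin n → Fin m) (ζ : {j : Fin n // j ∉ Tset φ} → {x : K // IsRootOfUnity K x}) :
    Matrix (Fin m) (Fin n) K :=
  fun i j => if φ j = i then (if h : j ∈ Tset φ then 1 else (ζ ⟨j, h⟩ : K)) else 0

lemma Gmat_diag (φ : Fin n → Fin m) (ζ : {j : Fin n // j ∉ Tset φ} → {x : K // IsRootOfUnity K x})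
    (j : Fin n) : IsRootOfUnity K (Gmat φ ζ (φ j) j) := by
  unfold Gmat
  rw [if_pos rfl]
  by_cases h : j ∈ Tset φ
  · rw [dif_pos h]; exact isRootOfUnity_one
  · rw [dif_neg h]; exact (ζ ⟨j, h⟩).2

lemma Gmat_off (φ : Fin n → Fin m) (ζ : {j : Fin n // j ∉ Tset φ} → {x : K // IsRootOfUnity K x})
    {i : Fin m} {j : Fin n} (h : φ j ≠ i) : Gmat φ ζ i j = 0 := by
  unfold Gmat; rw [if_neg h]

/-- description of membership of pivots in `Tset`. -/
lemma pivot_mem_Tset {φ : Fin n → Fin m} {p : Fin m → Fin n}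
    (hpl : ∀ i, φ (p i) = i) (hpm : ∀ i j, φ j = i → p i ≤ j) (i : Fin m) :
    p i ∈ Tset φ := by
  rw [mem_Tset]
  intro j' h
  exact hpm i j' (by rw [h, hpl])

lemma mem_Tset_eq_pivot {φ : Fin n → Fin m} {p : Fin m → Fin n}
    (hpl : ∀ i, φ (p i) = i) (hpm : ∀ i j, φ j = i → p i ≤ j) {j : Fin n}
    (hj : j ∈ Tset φ) : j = p (φ j) := by
  have h1 : p (φ j) ≤ j := hpm _ _ rfl
  have h2 : j ≤ p (φ j) := (mem_Tset.mp hj) _ (hpl (φ j))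
  exact le_antisymm h2 h1

lemma Gmat_cond {φ : Fin n → Fin m} (hφ : IsCano φ)
    (ζ : {j : Fin n // j ∉ Tset φ} → {x : K // IsRootOfUnity K x}) :
    IsRREF K (Gmat φ ζ) ∧ (Gmat φ ζ).rank = m ∧
      (∀ i j, Gmat φ ζ i j = 0 ∨ IsRootOfUnity K (Gmat φ ζ i j)) ∧
      (∀ j, ∃! i, Gmat φ ζ i j ≠ 0) := by
  obtain ⟨p, hmono, hpl, hpm⟩ := hφ
  have hpivot1 : ∀ i, Gmat φ ζ i (p i) = 1 := by
    intro i
    unfold Gmat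
    rw [if_pos (hpl i), dif_pos (pivot_mem_Tset hpl hpm i)]
  refine ⟨⟨p, hmono, hpivot1, ?_, ?_⟩, ?_, ?_, ?_⟩
  · -- left of pivot zero
    intro i j hj
    apply Gmat_off
    intro hc
    have := hpm i j hc
    rw [Fin.le_def] at this
    omega
  · -- pivot column zeros
    intro i i' hne
    apply Gmat_off
    rw [hpl i]
    exact fun hc => hne hc.symm
  · -- rank
    classical
    set P : Matrix (Fin n) (Fin m) K := fun j i => if j = p i then 1 else 0 with hP
    have hDP : Gmat φ ζ * P = 1 := by
      ext i i'
      rw [Matrix.mul_apply, Finset.sum_eq_single (p i')]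
      · have hPv : P (p i') i' = 1 := by simp [hP]
        rw [hPv, mul_one]
        by_cases hii : i' = i
        · subst hii; rw [hpivot1 i', Matrix.one_apply_eq]
        · rw [Gmat_off φ ζ (by rw [hpl i']; exact fun hc => hii hc),
            Matrix.one_apply_ne (fun hc => hii hc.symm)]
      · intro j _ hj
        have hPv : P j i' = 0 := by simp [hP, hj]
        rw [hPv, mul_zero]
      · intro h; exact absurd (Finset.mem_univ _) h
    have hrank1 : (Gmat φ ζ * P).rank = m := by
      rw [hDP, Matrix.rank_one, Fintype.card_fin]
    have hle1 : m ≤ (Gmat φ ζ).rank :=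
      le_trans (le_of_eq hrank1.symm) (Matrix.rank_mul_le_left _ _)
    have hle2 : (Gmat φ ζ).rank ≤ m := by
      have := Matrix.rank_le_card_height (Gmat φ ζ)
      rwa [Fintype.card_fin] at this
    exact le_antisymm hle2 hle1
  · -- entries zero or root of unity
    intro i j
    by_cases h : φ j = i
    · right; rw [← h]; exact Gmat_diag φ ζ j
    · left; exact Gmat_off φ ζ h
  · -- unique nonzero entry in each column
    intro j
    refine ⟨φ j, (Gmat_diag φ ζ j).ne_zero, ?_⟩
    intro y hy
    by_contra hne
    exact hy (Gmat_off φ ζ (fun hc => hne hc.symm))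

/-- Extract the column-to-row map of a matrix in `A_m`. -/
lemma AT_extract (D : Matrix (Fin m) (Fin n) K)
    (h : IsRREF K D ∧ D.rank = m ∧ (∀ i j, D i j = 0 ∨ IsRootOfUnity K (D i j)) ∧
      (∀ j, ∃! i, D i j ≠ 0)) :
    ∃ (φ : Fin n → Fin m) (p : Fin m → Fin n), StrictMono p ∧ (∀ i, φ (p i) = i) ∧
      (∀ i j, φ j = i → p i ≤ j) ∧ (∀ i, D i (p i) = 1) ∧ (∀ j, D (φ j) j ≠ 0) ∧
      (∀ i j, i ≠ φ j → D i j = 0) ∧ Function.Surjective φ := by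
  obtain ⟨hR, hrank, hent, huniq⟩ := h
  set φ : Fin n → Fin m := fun j => (huniq j).choose with hφdef
  have hDφ : ∀ j, D (φ j) j ≠ 0 := fun j => (huniq j).choose_spec.1
  have hothers : ∀ j y, D y j ≠ 0 → y = φ j := fun j y hy => (huniq j).choose_spec.2 y hy
  obtain ⟨p, hmono, hone, hleft, hcol⟩ := hR
  have hpl : ∀ i, φ (p i) = i := by
    intro i
    exact (hothers (p i) i (by rw [hone i]; exact one_ne_zero)).symm
  have hpm : ∀ i j, φ j = i → p i ≤ j := by
    intro i j hij
    by_contra hc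
    rw [not_le] at hc
    have h0 := hleft i j (by rw [Fin.lt_def] at hc; exact hc)
    rw [← hij] at h0
    exact hDφ j h0
  refine ⟨φ, p, hmono, hpl, hpm, hone, hDφ, ?_, ?_⟩
  · intro i j hij
    by_contra hc
    exact hij ((hothers j i hc))
  · intro i
    exact ⟨p i, hpl i⟩

/-- The map from parametrization data to the set of matrices `A_m`. -/
def Gfun (σ : Σ φ : {φ : Fin n → Fin m // IsCano φ},
      ({j : Fin n // j ∉ Tset φ.1} → {x : K // IsRootOfUnity K x})) :
    {D : Matrix (Fin m) (Fin n) K // IsRREF K D ∧ D.rank = m ∧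
      (∀ i j, D i j = 0 ∨ IsRootOfUnity K (D i j)) ∧ (∀ j, ∃! i, D i j ≠ 0)} :=
  ⟨Gmat σ.1.1 σ.2, Gmat_cond σ.1.2 σ.2⟩

lemma Gfun_bijective : Function.Bijective (Gfun (K := K) (n := n) (m := m)) := by
  constructor
  · rintro ⟨⟨φ, hφ⟩, ζ⟩ ⟨⟨φ', hφ'⟩, ζ'⟩ hEq
    have hmat : Gmat φ ζ = Gmat φ' ζ' := congrArg Subtype.val hEq
    have hφφ : φ = φ' := by
      funext j
      by_contra hne
      have h1 : Gmat φ' ζ' (φ j) j = 0 := Gmat_off _ _ (fun hc => hne hc.symm)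
      rw [← hmat] at h1
      exact (Gmat_diag φ ζ j).ne_zero (by
        show Gmat φ ζ (φ j) j = 0
        exact h1)
    subst hφφ
    have hζ : ζ = ζ' := by
      funext jj
      obtain ⟨j, hj⟩ := jj
      apply Subtype.ext
      have h1 : Gmat φ ζ (φ j) j = (ζ ⟨j, hj⟩ : K) := by
        unfold Gmat
        rw [if_pos rfl, dif_neg hj]
      have h2 : Gmat φ ζ' (φ j) j = (ζ' ⟨j, hj⟩ : K) := by
        unfold Gmat
        rw [if_pos rfl, dif_neg hj]
      rw [← h1, hmat, h2]
    rw [hζ]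
  · rintro ⟨D, hD⟩
    obtain ⟨φ, p, hmono, hpl, hpm, hone, hDφ, hz, hsurj⟩ := AT_extract D hD
    set ζ : {j : Fin n // j ∉ Tset φ} → {x : K // IsRootOfUnity K x} :=
      fun jj => ⟨D (φ jj.1) jj.1, ((hD.2.2.1 _ _).resolve_left (hDφ jj.1))⟩ with hζdef
    refine ⟨⟨⟨φ, ⟨p, hmono, hpl, hpm⟩⟩, ζ⟩, ?_⟩
    apply Subtype.ext
    show Gmat φ ζ = D
    funext i j
    by_cases hij : φ j = i
    · by_cases hT : j ∈ Tset φ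
      · have hj' : j = p i := by
          rw [← hij]; exact mem_Tset_eq_pivot hpl hpm hT
        have h1 : Gmat φ ζ i j = 1 := by
          unfold Gmat; rw [if_pos hij, dif_pos hT]
        rw [h1, hj', hone i]
      · have : Gmat φ ζ i j = (ζ ⟨j, hT⟩ : K) := by
          unfold Gmat; rw [if_pos hij, dif_neg hT]
        rw [this, hζdef]
        show (D (φ j) j) = D i j
        rw [hij]
    · rw [Gmat_off φ ζ hij]
      exact (hz i j (fun hc => hij hc.symm)).symm

end ATsec

section FinalAux
variable {K}

lemma card_fun_rou {n m : ℕ} (φ : {φ : Fin n → Fin m // IsCano φ}) :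
    Fintype.card ({j : Fin n // j ∉ Tset φ.1} → {x : K // IsRootOfUnity K x})
      = (ωK K) ^ (n - m) := by
  classical
  rw [Fintype.card_fun]
  congr 1
  · rw [ωK, Nat.card_eq_fintype_card]
  · have h1 : Fintype.card {j : Fin n // j ∉ Tset φ.1}
        = Fintype.card (Fin n) - Fintype.card {j : Fin n // j ∈ Tset φ.1} :=
      Fintype.card_subtype_compl _
    rw [h1, Fintype.card_fin]
    congr 1
    rw [Fintype.card_of_subtype (Tset φ.1) (fun x => Iff.rfl), Tset_cano_card φ.2]

lemma tsum_AT {n m : ℕ} (c : ℝ) :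
    (∑' _ : {D : Matrix (Fin m) (Fin n) K // IsRREF K D ∧ D.rank = m ∧
        (∀ i j, D i j = 0 ∨ IsRootOfUnity K (D i j)) ∧ (∀ j, ∃! i, D i j ≠ 0)}, c)
      = (canoCard n m : ℝ) * ((ωK K : ℝ) ^ (n - m)) * c := by
  classical
  have e := Equiv.ofBijective _ (Gfun_bijective (K := K) (n := n) (m := m))
  rw [← e.tsum_eq (fun _ => c)]
  rw [tsum_fintype, Finset.sum_const, Finset.card_univ, nsmul_eq_mul]
  have hcard : Fintype.card (Σ φ : {φ : Fin n → Fin m // IsCano φ},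
      ({j : Fin n // j ∉ Tset φ.1} → {x : K // IsRootOfUnity K x}))
      = canoCard n m * (ωK K) ^ (n - m) := by
    rw [Fintype.card_sigma]
    rw [Finset.sum_congr rfl (fun φ _ => card_fun_rou φ)]
    rw [Finset.sum_const, Finset.card_univ, smul_eq_mul]
    congr 1
    rw [canoCard, Nat.card_eq_fintype_card]
  rw [hcard]
  push_cast
  ring

lemma term_eval {t n m : ℕ} {R V : ℝ} (hV : 0 ≤ V)
    (hvol : μEK K t (ballK K t R) = ENNReal.ofReal V)
    (D : {D : Matrix (Fin m) (Fin n) K // IsRREF K D ∧ D.rank = m ∧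
        (∀ i j, D i j = 0 ∨ IsRootOfUnity K (D i j)) ∧ (∀ j, ∃! i, D i j ≠ 0)}) :
    ((frakD K (D : Matrix (Fin m) (Fin n) K) : ℝ) ^ t)⁻¹ *
      ∫ x : Fin m → EK K t,
        (∏ j, (ballK K t R).indicator (fun _ => (1 : ℝ))
          (∑ i, actK K ((D : Matrix (Fin m) (Fin n) K) i j) (x i))) ∂(μMK K t m)
      = V ^ m := by
  obtain ⟨D, hD⟩ := D
  obtain ⟨φ, p, hmono, hpl, hpm, hone, hDφ, hz, hsurj⟩ := AT_extract D hD
  rw [frakD_eq_one D hD.2.2.1]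
  rw [integral_eval hV hvol D φ hsurj (fun j => (hD.2.2.1 _ _).resolve_left (hDφ j)) hz]
  norm_num

end FinalAux

/-- The main Poisson term: restricting the higher moment formula to the matrices of `A_m`
produces exactly `ω_K^n·e^{−V/ω_K}·∑_{r≥0} (r^n/r!)·(V/ω_K)^r`. -/
theorem poisson_main_term (t n : ℕ) (ht : 1 ≤ t) (hn : 1 ≤ n) (V R : ℝ) (hV : 0 < V)
    (hR : 0 < R) (hvol : μEK K t (ballK K t R) = ENNReal.ofReal V)
    (g : (Fin n → EK K t) → ℝ)
    (hg : g = fun y => ∏ j, (ballK K t R).indicator (fun _ => (1 : ℝ)) (y j)) :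
    (∑ m ∈ Finset.Icc 1 n,
        ∑' D : {D : Matrix (Fin m) (Fin n) K // IsRREF K D ∧ D.rank = m ∧
            (∀ i j, D i j = 0 ∨ IsRootOfUnity K (D i j)) ∧ (∀ j, ∃! i, D i j ≠ 0)},
          ((frakD K (D : Matrix (Fin m) (Fin n) K) : ℝ) ^ t)⁻¹ *
            ∫ x : Fin m → EK K t,
              g (fun j => ∑ i, actK K ((D : Matrix (Fin m) (Fin n) K) i j) (x i))
              ∂(μMK K t m)) =
      (ωK K : ℝ) ^ n * Real.exp (-(V / (ωK K : ℝ))) *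
        ∑' r : ℕ, ((r : ℝ) ^ n / (Nat.factorial r : ℝ)) * (V / (ωK K : ℝ)) ^ r := by

  have hω : (0 : ℝ) < (ωK K : ℝ) := by exact_mod_cast ωK_pos (K := K)
  have hLHS : ∀ m ∈ Finset.Icc 1 n,
      (∑' D : {D : Matrix (Fin m) (Fin n) K // IsRREF K D ∧ D.rank = m ∧
          (∀ i j, D i j = 0 ∨ IsRootOfUnity K (D i j)) ∧ (∀ j, ∃! i, D i j ≠ 0)},
        ((frakD K (D : Matrix (Fin m) (Fin n) K) : ℝ) ^ t)⁻¹ *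
          ∫ x : Fin m → EK K t,
            g (fun j => ∑ i, actK K ((D : Matrix (Fin m) (Fin n) K) i j) (x i))
            ∂(μMK K t m))
      = (canoCard n m : ℝ) * ((ωK K : ℝ) ^ (n - m)) * V ^ m := by
    intro m _
    rw [← tsum_AT (K := K) (n := n) (m := m) (V ^ m)]
    apply tsum_congr
    intro D
    rw [hg]
    exact term_eval hV.le hvol D
  rw [Finset.sum_congr rfl hLHS]
  have hcano : ∀ r : ℕ, (r : ℝ) ^ n
      = ∑ m ∈ Finset.range (n + 1), (canoCard n m : ℝ) * (r.descFactorial m : ℝ) := by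
    intro r
    have := sum_canoCard n r
    exact_mod_cast congrArg (Nat.cast : ℕ → ℝ) this
  have hrhs := rhs_eval (canoCard n) n hn (V / (ωK K : ℝ)) hcano (canoCard_zero hn)
  rw [mul_assoc, hrhs, Finset.mul_sum]
  apply Finset.sum_congr rfl
  intro m hm
  obtain ⟨hm1, hm2⟩ := Finset.mem_Icc.mp hm
  have hpow : ((ωK K : ℝ)) ^ n = (ωK K : ℝ) ^ (n - m) * (ωK K : ℝ) ^ m := by
    rw [← pow_add, Nat.sub_add_cancel hm2]
  rw [div_pow, hpow]
  field_simp

end Paper
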